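/- arXiv:1506.01122 — 2 statements merged into one kernel-verified Lean document; each statement's English description precedes it below -/
import Mathlib

section
/- Let f : [0,∞) → [0,∞) be convex with f(0) = 0 and f(t) > 0 for every t > 0, and define g(s) = sup_{t>0} f(t)/f(ts) for s ≥ 1. Then the map s ↦ s·g(s) is nonincreasing on [1,∞), i.e. for all 1 ≤ s₁ ≤ s₂ one has s₂·g(s₂) ≤ s₁·g(s₁). -/
/-- If `f : [0,∞) → [0,∞)` is convex with `f 0 = 0` and `f t > 0` for `t > 0`,
and `g s = ⨆_{t > 0} f t / f (t * s)` for `s ≥ 1`, then `s ↦ s * g s` is nonincreasing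
on `[1,∞)`. -/
theorem stmt1 (f : ℝ → ℝ) (g : ℝ → ℝ)
    (hf_conv : ConvexOn ℝ (Set.Ici 0) f)
    (hf0 : f 0 = 0)
    (hf_pos : ∀ t : ℝ, 0 < t → 0 < f t)
    (hg : ∀ s : ℝ, 1 ≤ s → g s = ⨆ t : Set.Ioi (0 : ℝ), f t / f (t * s)) :
    ∀ s₁ s₂ : ℝ, 1 ≤ s₁ → s₁ ≤ s₂ → s₂ * g s₂ ≤ s₁ * g s₁ := by
  intro s₁ s₂ hs₁ hs12
  have hs₂ : (1:ℝ) ≤ s₂ := hs₁.trans hs12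
  have hs₁0 : (0:ℝ) < s₁ := lt_of_lt_of_le one_pos hs₁
  have hs₂0 : (0:ℝ) < s₂ := lt_of_lt_of_le one_pos hs₂
  -- key slope lemma: b * f a ≤ a * f b for 0 < a ≤ b
  have key : ∀ a b : ℝ, 0 < a → a ≤ b → b * f a ≤ a * f b := by
    intro a b ha hab
    have hb : 0 < b := ha.trans_le hab
    have h1 : (0:ℝ) ≤ a / b := by positivity
    have h2 : (0:ℝ) ≤ 1 - a / b := by
      have : a / b ≤ 1 := (div_le_one hb).2 hab
      linarith
    have h3 : a / b + (1 - a / b) = 1 := by ring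
    have := hf_conv.2 (Set.mem_Ici.2 hb.le) (Set.mem_Ici.2 le_rfl) h1 h2 h3
    simp only [smul_eq_mul, mul_zero, add_zero, hf0] at this
    have hab' : a / b * b = a := div_mul_cancel₀ a hb.ne'
    rw [hab'] at this
    calc b * f a ≤ b * (a / b * f b) := by
          exact mul_le_mul_of_nonneg_left this hb.le
      _ = a * f b := by field_simp
  -- bound each term for s₁
  have hbdd : BddAbove (Set.range fun t : Set.Ioi (0:ℝ) => f t / f (t * s₁)) := by
    refine ⟨1, ?_⟩
    rintro x ⟨⟨t, ht⟩, rfl⟩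
    have ht : (0:ℝ) < t := ht
    have hts : (0:ℝ) < t * s₁ := by positivity
    have hk := key t (t * s₁) ht (le_mul_of_one_le_right ht.le hs₁)
    have h2 : s₁ * f t ≤ f (t * s₁) :=
      le_of_mul_le_mul_left (by linarith [hk]) ht
    have h1 : f t ≤ f (t * s₁) := by nlinarith [hf_pos t ht]
    exact div_le_one_of_le₀ h1 (hf_pos _ hts).le
  rw [hg s₁ hs₁, hg s₂ hs₂]
  have hmain : (⨆ t : Set.Ioi (0:ℝ), f t / f (t * s₂))
      ≤ (s₁ / s₂) * ⨆ t : Set.Ioi (0:ℝ), f t / f (t * s₁) := by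
    refine ciSup_le fun ⟨t, ht⟩ => ?_
    have ht : (0:ℝ) < t := ht
    have hts₁ : (0:ℝ) < t * s₁ := by positivity
    have hts₂ : (0:ℝ) < t * s₂ := by positivity
    have hk := key (t * s₁) (t * s₂) hts₁ (by nlinarith)
    have hf₁ := hf_pos (t * s₁) hts₁
    have hf₂ := hf_pos (t * s₂) hts₂
    have hft : (0:ℝ) < f t := hf_pos t ht
    have step1 : f t / f (t * s₂) ≤ (s₁ / s₂) * (f t / f (t * s₁)) := by
      have h3 : s₂ * f (t * s₁) ≤ s₁ * f (t * s₂) :=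
        le_of_mul_le_mul_left (by linarith [hk]) ht
      rw [div_mul_div_comm, div_le_div_iff₀ hf₂ (by positivity)]
      nlinarith [mul_le_mul_of_nonneg_left h3 hft.le]
    have step2 : f t / f (t * s₁) ≤ ⨆ t : Set.Ioi (0:ℝ), f t / f (t * s₁) :=
      le_ciSup hbdd ⟨t, ht⟩
    calc f t / f (t * s₂) ≤ (s₁ / s₂) * (f t / f (t * s₁)) := step1
      _ ≤ (s₁ / s₂) * ⨆ t : Set.Ioi (0:ℝ), f t / f (t * s₁) := by
          exact mul_le_mul_of_nonneg_left step2 (by positivity)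
  calc s₂ * ⨆ t : Set.Ioi (0:ℝ), f t / f (t * s₂)
      ≤ s₂ * ((s₁ / s₂) * ⨆ t : Set.Ioi (0:ℝ), f t / f (t * s₁)) :=
        mul_le_mul_of_nonneg_left hmain hs₂0.le
    _ = s₁ * ⨆ t : Set.Ioi (0:ℝ), f t / f (t * s₁) := by field_simp
end

section
/- (Rellich inequality) Let N ≥ 5 and let u : ℝᴺ → ℝ be a smooth function with compact support. Then ∫_{ℝᴺ} |Δu(x)|² dx ≥ (N(N−4)/4)² · ∫_{ℝᴺ} |x|⁻⁴ u(x)² dx, where Δu denotes the Laplacian of u and |x| the Euclidean norm of x. -/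
open MeasureTheory Set Filter Topology

variable {N : ℕ}

local notation "E" => EuclideanSpace ℝ (Fin N)

noncomputable def ee (N : ℕ) (i : Fin N) : EuclideanSpace ℝ (Fin N) := EuclideanSpace.single i 1

lemma contDiff_fderiv_apply {f : E → ℝ} (hf : ContDiff ℝ (⊤ : ℕ∞) f) (v : E) :
    ContDiff ℝ (⊤ : ℕ∞) (fun x => fderiv ℝ f x v) :=
  (hf.fderiv_right ((by simp))).clm_apply contDiff_const

lemma integrable_cs {f : E → ℝ} (hc : Continuous f) (hs : HasCompactSupport f) :
    Integrable f :=
  hc.integrable_of_hasCompactSupport hs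

/-- integral of a directional derivative of a smooth compactly supported function vanishes -/
lemma integral_fderiv_eq_zero {f : E → ℝ} (hf : ContDiff ℝ (⊤ : ℕ∞) f)
    (hsupp : HasCompactSupport f) (v : E) :
    ∫ x, fderiv ℝ f x v = 0 := by
  obtain ⟨D, hD⟩ : ∃ D, LipschitzWith D f :=
    hf.lipschitzWith_of_hasCompactSupport hsupp (by simp)
  have h1 := LipschitzWith.integral_lineDeriv_mul_eq (μ := volume)
    (f := fun _ : E => (1:ℝ)) (g := f) (LipschitzWith.const' (K := 0) 1) hD hsupp (-v)
  have h2 : ∀ x : E, lineDeriv ℝ (fun _ : E => (1:ℝ)) x (-v) = 0 := by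
    intro x
    simp [lineDeriv, derivWithin, fderivWithin_const_apply]
  have h3 : ∀ x : E, lineDeriv ℝ f x (- -v) = fderiv ℝ f x v := fun x => by
    rw [neg_neg]; exact ((hf.differentiable (by simp)) x).lineDeriv_eq_fderiv
  simp only [h2, zero_mul, mul_one, h3, integral_zero] at h1
  exact h1.symm

/-- integration by parts -/
lemma integral_ibp {f g : E → ℝ} (hf : ContDiff ℝ (⊤ : ℕ∞) f) (hfs : HasCompactSupport f)
    (hg : ContDiff ℝ (⊤ : ℕ∞) g) (v : E) :
    ∫ x, fderiv ℝ f x v * g x = - ∫ x, f x * fderiv ℝ g x v := by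
  have hfg : ∫ x, fderiv ℝ (fun y => f y * g y) x v = 0 :=
    integral_fderiv_eq_zero (hf.mul hg) (hfs.mul_right) v
  have hpt : ∀ x : E, fderiv ℝ (fun y => f y * g y) x v
      = fderiv ℝ f x v * g x + f x * fderiv ℝ g x v := by
    intro x
    rw [fderiv_fun_mul ((hf.differentiable (by simp)) x) ((hg.differentiable (by simp)) x)]
    simp only [ContinuousLinearMap.add_apply, ContinuousLinearMap.smul_apply, smul_eq_mul]
    ring
  rw [integral_congr_ae (Eventually.of_forall hpt)] at hfg
  have i1 : Integrable (fun x => fderiv ℝ f x v * g x) :=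
    integrable_cs ((contDiff_fderiv_apply hf v).continuous.mul (hg.continuous))
      ((hfs.fderiv_apply (𝕜 := ℝ) v).mul_right)
  have i2 : Integrable (fun x => f x * fderiv ℝ g x v) :=
    integrable_cs ((hf.continuous).mul (contDiff_fderiv_apply hg v).continuous)
      (hfs.mul_right)
  rw [integral_add i1 i2] at hfg
  linarith

noncomputable def pd (N : ℕ) (f : EuclideanSpace ℝ (Fin N) → ℝ) (i : Fin N)
    (x : EuclideanSpace ℝ (Fin N)) : ℝ := fderiv ℝ f x (ee N i)

lemma pd_contDiff {f : E → ℝ} (hf : ContDiff ℝ (⊤ : ℕ∞) f) (i : Fin N) :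
    ContDiff ℝ (⊤ : ℕ∞) (pd N f i) := contDiff_fderiv_apply hf _

lemma pd_cs {f : E → ℝ} (hf : HasCompactSupport f) (i : Fin N) :
    HasCompactSupport (pd N f i) := hf.fderiv_apply (𝕜 := ℝ) _

lemma cs_sq {f : E → ℝ} (hf : HasCompactSupport f) :
    HasCompactSupport (fun x : E => (f x)^2) :=
  (hf.comp_left (g := fun t : ℝ => t^2) (by norm_num) : _)

lemma cs_sum {ι : Type*} (s : Finset ι) (f : ι → E → ℝ)
    (h : ∀ i ∈ s, HasCompactSupport (f i)) :
    HasCompactSupport (fun x => ∑ i ∈ s, f i x) := by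
  classical
  induction s using Finset.induction_on with
  | empty => simp only [Finset.sum_empty]; exact HasCompactSupport.zero
  | insert a s hnot ih =>
    simp only [Finset.sum_insert hnot]
    exact (h a (Finset.mem_insert_self a s)).add
      (ih fun i hi => h i (Finset.mem_insert_of_mem hi))

noncomputable def Kf (N : ℕ) (ε : ℝ) (x : EuclideanSpace ℝ (Fin N)) : ℝ := ‖x‖^2 + ε
noncomputable def wf (N : ℕ) (ε : ℝ) (x : EuclideanSpace ℝ (Fin N)) : ℝ := (Kf N ε x)⁻¹

variable {ε : ℝ}

lemma K_pos (hε : 0 < ε) (x : E) : 0 < Kf N ε x :=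
  add_pos_of_nonneg_of_pos (by positivity) hε

lemma contDiff_K : ContDiff ℝ (⊤ : ℕ∞) (Kf N ε) :=
  (contDiff_norm_sq ℝ).add contDiff_const

lemma contDiff_w (hε : 0 < ε) : ContDiff ℝ (⊤ : ℕ∞) (wf N ε) :=
  contDiff_K.inv fun x => (K_pos hε x).ne'

lemma w_pos (hε : 0 < ε) (x : E) : 0 < wf N ε x := inv_pos.2 (K_pos hε x)

lemma sum_coord_sq (x : E) : ∑ i, (x i)^2 = ‖x‖^2 := by
  rw [EuclideanSpace.norm_eq, Real.sq_sqrt (by positivity)]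
  simp [sq_abs]

lemma hasFDerivAt_K (x : E) : HasFDerivAt (Kf N ε) (2 • (innerSL ℝ x)) x :=
  (hasStrictFDerivAt_norm_sq x).hasFDerivAt.add_const ε

lemma fderiv_K_apply (x : E) (i : Fin N) : fderiv ℝ (Kf N ε) x (ee N i) = 2 * x i := by
  rw [(hasFDerivAt_K x).fderiv]
  simp [ee, real_inner_comm, EuclideanSpace.inner_single_left, EuclideanSpace.inner_single_right]

lemma fderiv_w_apply (hε : 0 < ε) (x : E) (i : Fin N) :
    fderiv ℝ (wf N ε) x (ee N i) = -2 * x i * (wf N ε x)^2 := by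
  have h : HasFDerivAt (wf N ε)
      ((ContinuousLinearMap.smulRight (1 : ℝ →L[ℝ] ℝ) (-((Kf N ε x)^2)⁻¹)).comp
        (2 • (innerSL ℝ x))) x :=
    (hasFDerivAt_inv (K_pos hε x).ne').comp x (hasFDerivAt_K x)
  rw [h.fderiv]
  have : ((2 : ℕ) • (innerSL ℝ x)) (ee N i) = 2 * x i := by
    simp [ee, real_inner_comm, EuclideanSpace.inner_single_left, EuclideanSpace.inner_single_right]
  simp only [ContinuousLinearMap.comp_apply, this, ContinuousLinearMap.smulRight_apply,
    ContinuousLinearMap.one_apply, smul_eq_mul, wf, inv_pow]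
  ring

lemma fderiv_mul_apply {f g : E → ℝ} {x v : E} (hf : DifferentiableAt ℝ f x)
    (hg : DifferentiableAt ℝ g x) :
    fderiv ℝ (fun y => f y * g y) x v = f x * fderiv ℝ g x v + g x * fderiv ℝ f x v := by
  rw [fderiv_fun_mul hf hg]
  simp only [ContinuousLinearMap.add_apply, ContinuousLinearMap.smul_apply, smul_eq_mul]

lemma contDiff_coord (i : Fin N) : ContDiff ℝ (⊤ : ℕ∞) (fun y : E => y i) :=
  (EuclideanSpace.proj i : EuclideanSpace ℝ (Fin N) →L[ℝ] ℝ).contDiff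

lemma fderiv_coord_apply (x : E) (i : Fin N) :
    fderiv ℝ (fun y : E => y i) x (ee N i) = 1 := by
  have : (fun y : E => y i) = ⇑(EuclideanSpace.proj i : EuclideanSpace ℝ (Fin N) →L[ℝ] ℝ) := rfl
  rw [this, ContinuousLinearMap.fderiv]
  simp [ee]

lemma eqA (hε : 0 < ε) {u : E → ℝ} (hu : ContDiff ℝ (⊤ : ℕ∞) u) (hsupp : HasCompactSupport u)
    (i : Fin N) :
    ∫ x, pd N (pd N u i) i x * (u x * wf N ε x)
      = - (∫ x, (pd N u i x)^2 * wf N ε x)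
        + 2 * ∫ x, u x * pd N u i x * (x i * (wf N ε x)^2) := by
  have hw := contDiff_w (N := N) (ε := ε) hε
  have hwc := hw.continuous
  have hcu := hu.continuous
  have hcdu := (pd_contDiff hu i).continuous
  have h0 := integral_ibp (pd_contDiff hu i) (pd_cs hsupp i) (hu.mul hw) (ee N i)
  have h1 : ∀ x : E, pd N u i x * fderiv ℝ (fun y => u y * wf N ε y) x (ee N i)
      = (pd N u i x)^2 * wf N ε x
        - 2 * (u x * pd N u i x * (x i * (wf N ε x)^2)) := by
    intro x
    rw [fderiv_mul_apply ((hu.differentiable (by simp)) x) ((hw.differentiable (by simp)) x),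
      fderiv_w_apply hε x i]
    simp only [pd]
    ring
  have i2 : Integrable (fun x : E => (pd N u i x)^2 * wf N ε x) :=
    integrable_cs ((hcdu.pow 2).mul hwc) ((cs_sq (pd_cs hsupp i)).mul_right)
  have i3 : Integrable (fun x : E => u x * pd N u i x * (x i * (wf N ε x)^2)) :=
    integrable_cs ((hcu.mul hcdu).mul (((contDiff_coord i).continuous).mul (hwc.pow 2)))
      ((hsupp.mul_right).mul_right)
  rw [integral_congr_ae (Filter.Eventually.of_forall h1),
    integral_sub i2 (i3.const_mul 2), integral_const_mul] at h0
  simp only [pd] at h0 ⊢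
  rw [h0]
  ring

lemma eqB (hε : 0 < ε) {u : E → ℝ} (hu : ContDiff ℝ (⊤ : ℕ∞) u) (hsupp : HasCompactSupport u)
    (i : Fin N) :
    2 * ∫ x, u x * pd N u i x * (x i * (wf N ε x)^2)
      = - ∫ x, (u x)^2 * ((wf N ε x)^2 - 4*(x i)^2*(wf N ε x)^3) := by
  have hw := contDiff_w (N := N) (ε := ε) hε
  have hVi : ContDiff ℝ (⊤ : ℕ∞) (fun y : E => y i * (wf N ε y * wf N ε y)) :=
    (contDiff_coord i).mul (hw.mul hw)
  have h0 := integral_ibp (hu.mul hu) (hsupp.mul_right) hVi (ee N i)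
  have h1 : ∀ x : E, fderiv ℝ (fun y => u y * u y) x (ee N i) * (x i * (wf N ε x * wf N ε x))
      = 2 * (u x * pd N u i x * (x i * (wf N ε x)^2)) := by
    intro x
    rw [fderiv_mul_apply ((hu.differentiable (by simp)) x) ((hu.differentiable (by simp)) x)]
    simp only [pd]
    ring
  have h2 : ∀ x : E, u x * u x * fderiv ℝ (fun y : E => y i * (wf N ε y * wf N ε y)) x (ee N i)
      = (u x)^2 * ((wf N ε x)^2 - 4*(x i)^2*(wf N ε x)^3) := by
    intro x
    rw [fderiv_mul_apply (((contDiff_coord i).differentiable (by simp)) x)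
        (((hw.mul hw).differentiable (by simp)) x),
      fderiv_mul_apply ((hw.differentiable (by simp)) x) ((hw.differentiable (by simp)) x),
      fderiv_w_apply hε x i, fderiv_coord_apply x i]
    ring
  rw [integral_congr_ae (Filter.Eventually.of_forall h1),
    integral_congr_ae (Filter.Eventually.of_forall h2), integral_const_mul] at h0
  exact h0

/-- The Laplacian `Δu = Σ_{i=1}^N ∂²u/∂x_i²` of a function `u : ℝᴺ → ℝ`. -/
noncomputable def laplacian {N : ℕ} (u : EuclideanSpace ℝ (Fin N) → ℝ)
    (x : EuclideanSpace ℝ (Fin N)) : ℝ :=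
  ∑ i : Fin N,
    fderiv ℝ (fun y => fderiv ℝ u y (EuclideanSpace.single i 1)) x (EuclideanSpace.single i 1)

set_option maxHeartbeats 1000000 in
lemma key (hN : 5 ≤ N) {u : E → ℝ} (hu : ContDiff ℝ (⊤ : ℕ∞) u) (hsupp : HasCompactSupport u)
    (hε : 0 < ε) :
    ((N:ℝ) * ((N:ℝ) - 4) / 4)^2 * ∫ x, (u x)^2 * (wf N ε x)^2 ≤ ∫ x, (laplacian u x)^2 := by
  have hn : (5:ℝ) ≤ (N:ℝ) := by exact_mod_cast hN
  have hw := contDiff_w (N := N) (ε := ε) hε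
  have hwc := hw.continuous
  have hcu := hu.continuous
  have hcdu : ∀ i : Fin N, Continuous (pd N u i) := fun i => (pd_contDiff hu i).continuous
  have hcddu : ∀ i : Fin N, Continuous (pd N (pd N u i) i) :=
    fun i => (pd_contDiff (pd_contDiff hu i) i).continuous
  have hxi : ∀ i : Fin N, Continuous (fun x : E => x i) :=
    fun i => (contDiff_coord i).continuous
  have hlapeq : laplacian u = fun x => ∑ i, pd N (pd N u i) i x := by
    funext x
    unfold laplacian pd ee
    rfl
  have hlap_cs : HasCompactSupport (laplacian u) := by
    rw [hlapeq]; exact cs_sum _ _ fun i _ => pd_cs (pd_cs hsupp i) i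
  have hlap_c : Continuous (laplacian u) := by
    rw [hlapeq]; exact continuous_finset_sum _ fun i _ => hcddu i
  -- integrability of all atoms
  have i1 : ∀ i : Fin N, Integrable (fun x : E => pd N (pd N u i) i x * (u x * wf N ε x)) :=
    fun i => integrable_cs ((hcddu i).mul (hcu.mul hwc))
      ((pd_cs (pd_cs hsupp i) i).mul_right)
  have i2 : ∀ i : Fin N, Integrable (fun x : E => (pd N u i x)^2 * wf N ε x) :=
    fun i => integrable_cs (((hcdu i).pow 2).mul hwc) ((cs_sq (pd_cs hsupp i)).mul_right)
  have i3 : ∀ i : Fin N, Integrable (fun x : E => u x * pd N u i x * (x i * (wf N ε x)^2)) :=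
    fun i => integrable_cs ((hcu.mul (hcdu i)).mul ((hxi i).mul (hwc.pow 2)))
      ((hsupp.mul_right).mul_right)
  have i5 : ∀ i : Fin N, Integrable (fun x : E => (u x)^2 * ((x i)^2 * (wf N ε x)^3)) :=
    fun i => integrable_cs ((hcu.pow 2).mul (((hxi i).pow 2).mul (hwc.pow 3)))
      ((cs_sq hsupp).mul_right)
  have iC : Integrable (fun x : E => (u x)^2 * (wf N ε x)^2) :=
    integrable_cs ((hcu.pow 2).mul (hwc.pow 2)) ((cs_sq hsupp).mul_right)
  have iR : Integrable (fun x : E => (u x)^2 * (‖x‖^2 * (wf N ε x)^3)) :=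
    integrable_cs ((hcu.pow 2).mul ((continuous_norm.pow 2).mul (hwc.pow 3)))
      ((cs_sq hsupp).mul_right)
  have iH : Integrable (fun x : E => (∑ i, (pd N u i x)^2) * wf N ε x) :=
    integrable_cs ((continuous_finset_sum _ fun i _ => (hcdu i).pow 2).mul hwc)
      ((cs_sum _ _ fun i _ => cs_sq (pd_cs hsupp i)).mul_right)
  have iS : Integrable (fun x : E => u x * (∑ i, pd N u i x * x i) * (wf N ε x)^2) :=
    integrable_cs ((hcu.mul (continuous_finset_sum _ fun i _ => (hcdu i).mul (hxi i))).mul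
      (hwc.pow 2)) ((hsupp.mul_right).mul_right)
  have iT : Integrable (fun x : E => laplacian u x * (u x * wf N ε x)) :=
    integrable_cs (hlap_c.mul (hcu.mul hwc)) (hlap_cs.mul_right)
  -- sum decompositions
  have hLsum : ∫ x, laplacian u x * (u x * wf N ε x)
      = ∑ i, ∫ x, pd N (pd N u i) i x * (u x * wf N ε x) := by
    rw [← integral_finset_sum _ fun i _ => i1 i]
    refine integral_congr_ae (Filter.Eventually.of_forall fun x => ?_)
    show laplacian u x * (u x * wf N ε x) = ∑ i, pd N (pd N u i) i x * (u x * wf N ε x)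
    rw [hlapeq, Finset.sum_mul]
  have hHsum : ∫ x, (∑ i, (pd N u i x)^2) * wf N ε x
      = ∑ i, ∫ x, (pd N u i x)^2 * wf N ε x := by
    rw [← integral_finset_sum _ fun i _ => i2 i]
    refine integral_congr_ae (Filter.Eventually.of_forall fun x => ?_)
    show (∑ i, (pd N u i x)^2) * wf N ε x = ∑ i, (pd N u i x)^2 * wf N ε x
    rw [Finset.sum_mul]
  have hSsum : ∫ x, u x * (∑ i, pd N u i x * x i) * (wf N ε x)^2
      = ∑ i, ∫ x, u x * pd N u i x * (x i * (wf N ε x)^2) := by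
    rw [← integral_finset_sum _ fun i _ => i3 i]
    refine integral_congr_ae (Filter.Eventually.of_forall fun x => ?_)
    show u x * (∑ i, pd N u i x * x i) * (wf N ε x)^2
      = ∑ i, u x * pd N u i x * (x i * (wf N ε x)^2)
    rw [Finset.mul_sum, Finset.sum_mul]
    exact Finset.sum_congr rfl fun i _ => by ring
  have hRsum : ∑ i, ∫ x, (u x)^2 * ((x i)^2 * (wf N ε x)^3)
      = ∫ x, (u x)^2 * (‖x‖^2 * (wf N ε x)^3) := by
    rw [← integral_finset_sum _ fun i _ => i5 i]
    refine integral_congr_ae (Filter.Eventually.of_forall fun x => ?_)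
    show (∑ i, (u x)^2 * ((x i)^2 * (wf N ε x)^3))
      = (u x)^2 * (‖x‖^2 * (wf N ε x)^3)
    rw [← sum_coord_sq x, Finset.sum_mul, Finset.mul_sum]
  have h4split : ∀ i : Fin N, ∫ x, (u x)^2 * ((wf N ε x)^2 - 4*(x i)^2*(wf N ε x)^3)
      = (∫ x, (u x)^2 * (wf N ε x)^2) - 4 * ∫ x, (u x)^2 * ((x i)^2 * (wf N ε x)^3) := by
    intro i
    rw [show (fun x : E => (u x)^2 * ((wf N ε x)^2 - 4*(x i)^2*(wf N ε x)^3))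
        = fun x : E => (u x)^2 * (wf N ε x)^2 - 4 * ((u x)^2 * ((x i)^2 * (wf N ε x)^3))
        from funext fun x => by ring]
    rw [integral_sub iC ((i5 i).const_mul 4), integral_const_mul]
  -- Hardy integration by parts identity, summed
  have hHardy : 2 * ∫ x, u x * (∑ i, pd N u i x * x i) * (wf N ε x)^2
      = -((N:ℝ) * (∫ x, (u x)^2 * (wf N ε x)^2)
          - 4 * ∫ x, (u x)^2 * (‖x‖^2 * (wf N ε x)^3)) := by
    rw [hSsum, Finset.mul_sum]
    rw [Finset.sum_congr rfl fun i _ => eqB hε hu hsupp i]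
    rw [Finset.sum_congr rfl fun (i : Fin N) _ => congrArg Neg.neg (h4split i)]
    rw [Finset.sum_neg_distrib, Finset.sum_sub_distrib, Finset.sum_const, ← Finset.mul_sum,
      hRsum]
    simp [Finset.card_univ]
  -- main integration by parts identity
  have hT : ∫ x, laplacian u x * (u x * wf N ε x)
      = -(∫ x, (∑ i, (pd N u i x)^2) * wf N ε x)
        + 2 * ∫ x, u x * (∑ i, pd N u i x * x i) * (wf N ε x)^2 := by
    rw [hLsum, Finset.sum_congr rfl fun i _ => eqA hε hu hsupp i, Finset.sum_add_distrib,
      Finset.sum_neg_distrib, ← Finset.mul_sum, hHsum, hSsum]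
  -- R ≤ C
  have hRC : ∫ x, (u x)^2 * (‖x‖^2 * (wf N ε x)^3) ≤ ∫ x, (u x)^2 * (wf N ε x)^2 := by
    refine integral_mono iR iC fun x => ?_
    have hw0 := w_pos (N := N) hε x
    have h1 : ‖x‖^2 * wf N ε x ≤ 1 := by
      rw [wf, mul_inv_le_iff₀ (K_pos hε x), one_mul, Kf]
      nlinarith
    have h2 : (u x)^2 * (‖x‖^2 * (wf N ε x)^3) = (u x)^2 * (wf N ε x)^2 * (‖x‖^2 * wf N ε x) := by
      ring
    rw [h2]
    nlinarith [sq_nonneg (u x), sq_nonneg (wf N ε x), mul_nonneg (sq_nonneg (u x)) (sq_nonneg (wf N ε x))]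
  have hC0 : 0 ≤ ∫ x, (u x)^2 * (wf N ε x)^2 :=
    integral_nonneg fun x => mul_nonneg (sq_nonneg _) (sq_nonneg _)
  have hR0 : 0 ≤ ∫ x, (u x)^2 * (‖x‖^2 * (wf N ε x)^3) :=
    integral_nonneg fun x => mul_nonneg (sq_nonneg _)
      (mul_nonneg (sq_nonneg _) (pow_nonneg (w_pos hε x).le 3))
  -- Hardy quadratic inequality
  have hQH : 0 ≤ (∫ x, (∑ i, (pd N u i x)^2) * wf N ε x)
      + (2*(((N:ℝ)-4)/2)) * (∫ x, u x * (∑ i, pd N u i x * x i) * (wf N ε x)^2)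
      + (((N:ℝ)-4)/2)^2 * ∫ x, (u x)^2 * (‖x‖^2 * (wf N ε x)^3) := by
    set β : ℝ := ((N:ℝ)-4)/2 with hβ
    have keypt : ∀ x : E, wf N ε x * ∑ i, (pd N u i x + β * (u x * (x i * wf N ε x)))^2
        = (∑ i, (pd N u i x)^2) * wf N ε x
          + (2*β) * (u x * (∑ i, pd N u i x * x i) * (wf N ε x)^2)
          + β^2 * ((u x)^2 * (‖x‖^2 * (wf N ε x)^3)) := by
      intro x
      have hsum : ∑ i, (pd N u i x + β * (u x * (x i * wf N ε x)))^2
          = (∑ i, (pd N u i x)^2)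
            + (2*β*u x*wf N ε x) * (∑ i, pd N u i x * x i)
            + (β^2*(u x)^2*(wf N ε x)^2) * (∑ i, (x i)^2) := by
        rw [Finset.mul_sum, Finset.mul_sum, ← Finset.sum_add_distrib, ← Finset.sum_add_distrib]
        exact Finset.sum_congr rfl fun i _ => by ring
      rw [hsum, sum_coord_sq x]
      ring
    have h0 : 0 ≤ ∫ x, wf N ε x * ∑ i, (pd N u i x + β * (u x * (x i * wf N ε x)))^2 :=
      integral_nonneg fun x => mul_nonneg (w_pos hε x).le
        (Finset.sum_nonneg fun i _ => sq_nonneg _)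
    rw [integral_congr_ae (Filter.Eventually.of_forall keypt)] at h0
    have j1 : Integrable (fun x : E => (2*β) * (u x * (∑ i, pd N u i x * x i) * (wf N ε x)^2)) :=
      iS.const_mul (2*β)
    have j2 : Integrable (fun x : E => β^2 * ((u x)^2 * (‖x‖^2 * (wf N ε x)^3))) :=
      iR.const_mul (β^2)
    have j3 : Integrable (fun x : E => (∑ i, (pd N u i x)^2) * wf N ε x
        + (2*β) * (u x * (∑ i, pd N u i x * x i) * (wf N ε x)^2)) := iH.add j1
    rwa [integral_add j3 j2, integral_add iH j1, integral_const_mul, integral_const_mul] at h0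
  -- main quadratic inequality
  have hQM : 0 ≤ (∫ x, (laplacian u x)^2)
      + (2*((N:ℝ)*((N:ℝ)-4)/4)) * (∫ x, laplacian u x * (u x * wf N ε x))
      + ((N:ℝ)*((N:ℝ)-4)/4)^2 * ∫ x, (u x)^2 * (wf N ε x)^2 := by
    set lam : ℝ := (N:ℝ)*((N:ℝ)-4)/4 with hlam
    have iA : Integrable (fun x : E => (laplacian u x)^2) :=
      integrable_cs (hlap_c.pow 2) (cs_sq hlap_cs)
    have keypt : ∀ x : E, (laplacian u x + lam * (u x * wf N ε x))^2
        = (laplacian u x)^2 + (2*lam) * (laplacian u x * (u x * wf N ε x))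
          + lam^2 * ((u x)^2 * (wf N ε x)^2) := fun x => by ring
    have h0 : 0 ≤ ∫ x, (laplacian u x + lam * (u x * wf N ε x))^2 :=
      integral_nonneg fun x => sq_nonneg _
    rw [integral_congr_ae (Filter.Eventually.of_forall keypt)] at h0
    have j1 : Integrable (fun x : E => (2*lam) * (laplacian u x * (u x * wf N ε x))) :=
      iT.const_mul (2*lam)
    have j2 : Integrable (fun x : E => lam^2 * ((u x)^2 * (wf N ε x)^2)) :=
      iC.const_mul (lam^2)
    have j3 : Integrable (fun x : E => (laplacian u x)^2
        + (2*lam) * (laplacian u x * (u x * wf N ε x))) := iA.add j1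
    rwa [integral_add j3 j2, integral_add iA j1, integral_const_mul, integral_const_mul] at h0
  -- final arithmetic
  set A := ∫ x, (laplacian u x)^2 with hA
  set Cc := ∫ x, (u x)^2 * (wf N ε x)^2 with hCc
  set R := ∫ x, (u x)^2 * (‖x‖^2 * (wf N ε x)^3) with hR
  set H := ∫ x, (∑ i, (pd N u i x)^2) * wf N ε x with hH
  set S := ∫ x, u x * (∑ i, pd N u i x * x i) * (wf N ε x)^2 with hS
  set T := ∫ x, laplacian u x * (u x * wf N ε x) with hTT
  set n := (N:ℝ) with hnn
  -- substitute S and T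
  have hSval : S = (4*R - n*Cc)/2 := by linarith [hHardy]
  have hTval : T = -H + (4*R - n*Cc) := by rw [hT, hSval]; ring
  rw [hSval] at hQH
  rw [hTval] at hQM
  have k2 : (8*(n*(n-4)/4)*((n-4)/2+1) + 2*(n*(n-4)/4)*((n-4)/2)^2) * R
      ≤ (8*(n*(n-4)/4)*((n-4)/2+1) + 2*(n*(n-4)/4)*((n-4)/2)^2) * Cc := by
    apply mul_le_mul_of_nonneg_left hRC
    nlinarith
  have k1 := mul_nonneg (show (0:ℝ) ≤ 2*(n*(n-4)/4) by nlinarith) hQH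
  nlinarith [hQM, k1, k2]

set_option maxHeartbeats 1000000 in
/-- Rellich inequality: for `N ≥ 5` and `u : ℝᴺ → ℝ` smooth with compact
support, `∫ |Δu|² ≥ (N(N−4)/4)² ∫ |x|⁻⁴ u²`. -/
theorem stmt8 (N : ℕ) (hN : 5 ≤ N)
    (u : EuclideanSpace ℝ (Fin N) → ℝ)
    (hu_smooth : ContDiff ℝ (⊤ : ℕ∞) u) (hu_supp : HasCompactSupport u) :
    ((N : ℝ) * ((N : ℝ) - 4) / 4) ^ 2 * ∫ x, (u x) ^ 2 / ‖x‖ ^ 4 ≤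
      ∫ x, (laplacian u x) ^ 2 := by
  have hn : (5:ℝ) ≤ (N:ℝ) := by exact_mod_cast hN
  have hlam : (0:ℝ) < (N:ℝ) * ((N:ℝ) - 4) / 4 := by nlinarith
  have hlam2 : (0:ℝ) < ((N:ℝ) * ((N:ℝ) - 4) / 4)^2 := by positivity
  have hA0 : (0:ℝ) ≤ ∫ x, (laplacian u x)^2 := integral_nonneg fun x => sq_nonneg _
  have hcu := hu_smooth.continuous
  set eps : ℕ → ℝ := fun n => 1/(n+1) with heps
  have heps_pos : ∀ n : ℕ, 0 < eps n := fun n => by positivity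
  have hCn : ∀ n : ℕ, ∫ x, (u x)^2 * (wf N (eps n) x)^2
      ≤ (∫ x, (laplacian u x)^2) / ((N:ℝ) * ((N:ℝ) - 4) / 4)^2 := by
    intro n
    rw [le_div_iff₀ hlam2]
    calc (∫ x, (u x)^2 * (wf N (eps n) x)^2) * ((N:ℝ) * ((N:ℝ) - 4) / 4)^2
        = ((N:ℝ) * ((N:ℝ) - 4) / 4)^2 * ∫ x, (u x)^2 * (wf N (eps n) x)^2 := by ring
      _ ≤ _ := key hN hu_smooth hu_supp (heps_pos n)
  have hwcn : ∀ n : ℕ, Continuous (wf N (eps n)) := fun n => (contDiff_w (heps_pos n)).continuous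
  have hfn_int : ∀ n : ℕ, Integrable (fun x : EuclideanSpace ℝ (Fin N) => (u x)^2 * (wf N (eps n) x)^2) :=
    fun n => integrable_cs ((hcu.pow 2).mul ((hwcn n).pow 2)) ((cs_sq hu_supp).mul_right)
  -- monotonicity in n (everywhere)
  have hmono : ∀ x : EuclideanSpace ℝ (Fin N), Monotone (fun n : ℕ => (u x)^2 * (wf N (eps n) x)^2) := by
    intro x m k hmk
    have h1 : eps k ≤ eps m := by
      have : ((m:ℝ)+1) ≤ ((k:ℝ)+1) := by
        have := (Nat.cast_le (α := ℝ)).2 hmk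
        linarith
      exact one_div_le_one_div_of_le (by positivity) this
    have h2 : Kf N (eps k) x ≤ Kf N (eps m) x := by
      simp only [Kf]
      linarith
    have h3 : wf N (eps m) x ≤ wf N (eps k) x := inv_anti₀ (K_pos (heps_pos k) x) h2
    have h4 : (wf N (eps m) x)^2 ≤ (wf N (eps k) x)^2 :=
      pow_le_pow_left₀ (w_pos (heps_pos m) x).le h3 2
    exact mul_le_mul_of_nonneg_left h4 (sq_nonneg _)
  -- pointwise convergence off the origin
  have htend : ∀ x : EuclideanSpace ℝ (Fin N), x ≠ 0 →
      Tendsto (fun n : ℕ => (u x)^2 * (wf N (eps n) x)^2) atTop (𝓝 ((u x)^2 / ‖x‖^4)) := by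
    intro x hx
    have hr : (0:ℝ) < ‖x‖^2 := by
      have : 0 < ‖x‖ := norm_pos_iff.2 hx
      positivity
    have h1 : Tendsto eps atTop (𝓝 0) := tendsto_one_div_add_atTop_nhds_zero_nat
    have h2 : Tendsto (fun n : ℕ => Kf N (eps n) x) atTop (𝓝 (‖x‖^2)) := by
      have := tendsto_const_nhds (x := ‖x‖^2) (f := atTop (α := ℕ)) |>.add h1
      simpa [Kf] using this
    have h3 : Tendsto (fun n : ℕ => wf N (eps n) x) atTop (𝓝 (‖x‖^2)⁻¹) := h2.inv₀ hr.ne'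
    have h4 : Tendsto (fun n : ℕ => (u x)^2 * (wf N (eps n) x)^2) atTop
        (𝓝 ((u x)^2 * ((‖x‖^2)⁻¹)^2)) := tendsto_const_nhds.mul (h3.pow 2)
    have h5 : (u x)^2 * ((‖x‖^2)⁻¹)^2 = (u x)^2 / ‖x‖^4 := by
      rw [← inv_pow, ← pow_mul]
      norm_num
      rw [div_eq_mul_inv]
    rwa [h5] at h4
  -- x ≠ 0 a.e.
  haveI : Nontrivial (EuclideanSpace ℝ (Fin N)) := by
    refine ⟨EuclideanSpace.single (⟨0, by omega⟩ : Fin N) (1:ℝ), 0, fun h => ?_⟩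
    have := congrArg (fun v : EuclideanSpace ℝ (Fin N) => v ⟨0, by omega⟩) h
    simp [EuclideanSpace.single_apply] at this
  have hae : ∀ᵐ x : EuclideanSpace ℝ (Fin N) ∂volume, x ≠ (0:EuclideanSpace ℝ (Fin N)) := by
    rw [ae_iff]
    have hset : {a : EuclideanSpace ℝ (Fin N) | ¬a ≠ 0} = {(0:EuclideanSpace ℝ (Fin N))} := by ext a; simp
    rw [hset]
    exact measure_singleton 0
  -- sup identification
  have hsup : ∀ x : EuclideanSpace ℝ (Fin N), x ≠ 0 →
      (⨆ n : ℕ, ENNReal.ofReal ((u x)^2 * (wf N (eps n) x)^2))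
        = ENNReal.ofReal ((u x)^2 / ‖x‖^4) := by
    intro x hx
    have hm : Monotone (fun n : ℕ => ENNReal.ofReal ((u x)^2 * (wf N (eps n) x)^2)) :=
      fun m k hmk => ENNReal.ofReal_le_ofReal (hmono x hmk)
    have ht : Tendsto (fun n : ℕ => ENNReal.ofReal ((u x)^2 * (wf N (eps n) x)^2)) atTop
        (𝓝 (ENNReal.ofReal ((u x)^2 / ‖x‖^4))) :=
      (ENNReal.continuous_ofReal.tendsto _).comp (htend x hx)
    exact tendsto_nhds_unique (tendsto_atTop_iSup hm) ht
  -- the lintegral bound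
  have hle : ∫⁻ x, ENNReal.ofReal ((u x)^2 / ‖x‖^4)
      ≤ ENNReal.ofReal ((∫ x, (laplacian u x)^2) / ((N:ℝ) * ((N:ℝ) - 4) / 4)^2) := by
    have e1 : ∫⁻ x, ENNReal.ofReal ((u x)^2 / ‖x‖^4)
        = ∫⁻ x, ⨆ n : ℕ, ENNReal.ofReal ((u x)^2 * (wf N (eps n) x)^2) := by
      refine lintegral_congr_ae ?_
      filter_upwards [hae] with x hx
      exact (hsup x hx).symm
    rw [e1, lintegral_iSup (f := fun n x => ENNReal.ofReal ((u x)^2 * (wf N (eps n) x)^2))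
      (fun n => ((hcu.pow 2).mul ((hwcn n).pow 2)).measurable.ennreal_ofReal)
      (fun m k hmk x => ENNReal.ofReal_le_ofReal (hmono x hmk))]
    refine iSup_le fun n => ?_
    rw [← ofReal_integral_eq_lintegral_ofReal (hfn_int n)
      (Filter.Eventually.of_forall fun x => mul_nonneg (sq_nonneg _) (sq_nonneg _))]
    exact ENNReal.ofReal_le_ofReal (hCn n)
  have hFm : AEStronglyMeasurable (fun x : EuclideanSpace ℝ (Fin N) => (u x)^2 / ‖x‖^4) volume :=
    (((hcu.pow 2).measurable).div ((continuous_norm.pow 4).measurable)).aestronglyMeasurable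
  have hF0 : 0 ≤ᵐ[volume] fun x : EuclideanSpace ℝ (Fin N) => (u x)^2 / ‖x‖^4 :=
    Filter.Eventually.of_forall fun x => div_nonneg (sq_nonneg _) (by positivity)
  have heq : ∫ x, (u x)^2 / ‖x‖^4 = (∫⁻ x, ENNReal.ofReal ((u x)^2 / ‖x‖^4)).toReal :=
    integral_eq_lintegral_of_nonneg_ae hF0 hFm
  have hfin : ∫ x, (u x)^2 / ‖x‖^4
      ≤ (∫ x, (laplacian u x)^2) / ((N:ℝ) * ((N:ℝ) - 4) / 4)^2 := by
    rw [heq]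
    exact ENNReal.toReal_le_of_le_ofReal (div_nonneg hA0 hlam2.le) hle
  have := (le_div_iff₀ hlam2).1 hfin
  linarith
end
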